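/- arXiv:2312.10331 — 3 statements merged into one kernel-verified Lean document; each statement's English description precedes it below -/
import Mathlib

section
/- Let p ∈ [0,1] be a true probability and let q_A, q_B be real random variables with E[q_A] = E[q_B] = p, with variances σ_A² and σ_B² respectively (possibly dependent). Define r = (q_A + q_B)/2 and let the gain to A be G = κ(q_A − r)(p − r) for a constant κ > 0. Then E[G] = (κ/4)(σ_B² − σ_A²). -/
open MeasureTheory

lemma bet_gain_eq_sq_sub_sq (κ p a b : ℝ) :
    κ * (a - (a + b) / 2) * (p - (a + b) / 2) = κ / 4 * ((b - p) ^ 2 - (a - p) ^ 2) := by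
  ring

lemma MeasureTheory.Integrable.sub_const_sq {Ω : Type*} [MeasurableSpace Ω] {μ : Measure Ω}
    [IsFiniteMeasure μ] {f : Ω → ℝ} (hf : Integrable f μ)
    (hf2 : Integrable (fun ω => f ω ^ 2) μ) (c : ℝ) :
    Integrable (fun ω => (f ω - c) ^ 2) μ := by
  have hexpand : (fun ω => (f ω - c) ^ 2) = fun ω => f ω ^ 2 - 2 * c * f ω + c ^ 2 := by
    funext ω; ring
  rw [hexpand]
  exact (hf2.sub (hf.const_mul (2 * c))).add (integrable_const _)

theorem gentlemans_bet_general
    {Ω : Type*} [MeasurableSpace Ω] (μ : Measure Ω) [IsProbabilityMeasure μ]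
    (p κ σA σB : ℝ)
    (qA qB : Ω → ℝ)
    (hA : Integrable qA μ) (hB : Integrable qB μ)
    (hA2 : Integrable (fun ω => (qA ω)^2) μ)
    (hB2 : Integrable (fun ω => (qB ω)^2) μ)
    (hvA : ∫ ω, (qA ω - p)^2 ∂μ = σA^2)
    (hvB : ∫ ω, (qB ω - p)^2 ∂μ = σB^2) :
    ∫ ω, κ * (qA ω - (qA ω + qB ω)/2) * (p - (qA ω + qB ω)/2) ∂μ
      = (κ/4) * (σB^2 - σA^2) := by
  simp_rw [bet_gain_eq_sq_sub_sq]
  rw [integral_const_mul, integral_sub (hB.sub_const_sq hB2 p) (hA.sub_const_sq hA2 p),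
    hvA, hvB]

theorem gentlemans_bet
    {Ω : Type*} [MeasurableSpace Ω] (μ : Measure Ω) [IsProbabilityMeasure μ]
    (p κ σA σB : ℝ) (hp : p ∈ Set.Icc (0:ℝ) 1) (hκ : 0 < κ)
    (qA qB : Ω → ℝ)
    (hA : Integrable qA μ) (hB : Integrable qB μ)
    (hA2 : Integrable (fun ω => (qA ω)^2) μ)
    (hB2 : Integrable (fun ω => (qB ω)^2) μ)
    (hAB : Integrable (fun ω => qA ω * qB ω) μ)
    (hmA : ∫ ω, qA ω ∂μ = p) (hmB : ∫ ω, qB ω ∂μ = p)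
    (hvA : ∫ ω, (qA ω - p)^2 ∂μ = σA^2)
    (hvB : ∫ ω, (qB ω - p)^2 ∂μ = σB^2) :
    ∫ ω, κ * (qA ω - (qA ω + qB ω)/2) * (p - (qA ω + qB ω)/2) ∂μ
      = (κ/4) * (σB^2 - σA^2) :=
  gentlemans_bet_general μ p κ σA σB qA qB hA hB hA2 hB2 hvA hvB
end

section
/- For real numbers p_true, p_gamb, L > 0 with p_true ∈ [p_gamb − L, p_gamb + L], the function F(x₁,x₂) = (x₂ − p_true)(p_gamb + L − x₂)² + (p_true − x₁)(x₁ − p_gamb + L)², restricted to p_gamb − L ≤ x₁ ≤ x₂ ≤ p_gamb + L, is maximized at x₁ = (2/3)p_true + (1/3)(p_gamb − L) and x₂ = (2/3)p_true + (1/3)(p_gamb + L). -/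
/-! `F` splits as `g(x₂) + h(x₁)` with `g(x) = (x - p)(b - x)²` and `h` its mirror image under
`x ↦ -x`, so the constraint `x₁ ≤ x₂` never binds and each cubic can be maximized separately.
On `x ≤ b` the cubic `g` peaks at `x* = (2p + b)/3`, because
`g(x*) - g(x) = (x - x*)² ((4b - p)/3 - x)` and `(4b - p)/3 ≥ b` when `p ≤ b`. -/

theorem sub_mul_sq_sub_eq (p b x : ℝ) :
    ((2/3) * p + (1/3) * b - p) * (b - ((2/3) * p + (1/3) * b))^2 - (x - p) * (b - x)^2 =
      (x - ((2/3) * p + (1/3) * b))^2 * ((4 * b - p) / 3 - x) := by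
  ring

theorem sub_mul_sq_sub_le {p b x : ℝ} (hpb : p ≤ b) (hxb : x ≤ b) :
    (x - p) * (b - x)^2 ≤ ((2/3) * p + (1/3) * b - p) * (b - ((2/3) * p + (1/3) * b))^2 := by
  have h := sub_mul_sq_sub_eq p b x
  have hgap : 0 ≤ (x - ((2/3) * p + (1/3) * b))^2 * ((4 * b - p) / 3 - x) :=
    mul_nonneg (sq_nonneg _) (by linarith)
  linarith

theorem sub_mul_sub_sq_le {p a x : ℝ} (hap : a ≤ p) (hax : a ≤ x) :
    (p - x) * (x - a)^2 ≤ (p - ((2/3) * p + (1/3) * a)) * ((2/3) * p + (1/3) * a - a)^2 := by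
  have h := sub_mul_sq_sub_le (neg_le_neg hap) (neg_le_neg hax)
  convert h using 1 <;> ring

theorem bookmaker_optimal_spread_general
    (p_true p_gamb L : ℝ)
    (hp : p_true ∈ Set.Icc (p_gamb - L) (p_gamb + L))
    (F : ℝ → ℝ → ℝ)
    (hF : ∀ x₁ x₂, F x₁ x₂ =
      (x₂ - p_true) * (p_gamb + L - x₂)^2 + (p_true - x₁) * (x₁ - p_gamb + L)^2) :
    let x₁opt := (2/3) * p_true + (1/3) * (p_gamb - L)
    let x₂opt := (2/3) * p_true + (1/3) * (p_gamb + L)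
    (p_gamb - L ≤ x₁opt ∧ x₁opt ≤ x₂opt ∧ x₂opt ≤ p_gamb + L) ∧
    ∀ x₁ x₂, p_gamb - L ≤ x₁ → x₁ ≤ x₂ → x₂ ≤ p_gamb + L →
      F x₁ x₂ ≤ F x₁opt x₂opt := by
  obtain ⟨hlow, hhigh⟩ := hp
  refine ⟨⟨by linarith, by linarith, by linarith⟩, fun x₁ x₂ h₁ _ h₂ => ?_⟩
  have hup := sub_mul_sq_sub_le hhigh h₂
  have hdown := sub_mul_sub_sq_le hlow h₁
  have hshift : ∀ x, x - p_gamb + L = x - (p_gamb - L) := fun x => by ring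
  simp only [hF, hshift]
  linarith

theorem bookmaker_optimal_spread
    (p_true p_gamb L : ℝ) (hL : 0 < L)
    (hp : p_true ∈ Set.Icc (p_gamb - L) (p_gamb + L))
    (F : ℝ → ℝ → ℝ)
    (hF : ∀ x₁ x₂, F x₁ x₂ =
      (x₂ - p_true) * (p_gamb + L - x₂)^2 + (p_true - x₁) * (x₁ - p_gamb + L)^2) :
    let x₁opt := (2/3) * p_true + (1/3) * (p_gamb - L)
    let x₂opt := (2/3) * p_true + (1/3) * (p_gamb + L)
    (p_gamb - L ≤ x₁opt ∧ x₁opt ≤ x₂opt ∧ x₂opt ≤ p_gamb + L) ∧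
    ∀ x₁ x₂, p_gamb - L ≤ x₁ → x₁ ≤ x₂ → x₂ ≤ p_gamb + L →
      F x₁ x₂ ≤ F x₁opt x₂opt :=
  bookmaker_optimal_spread_general p_true p_gamb L hp F hF
end

section
/- Let ξ have Normal(0, σ²) distribution, σ > 0, and δ ∈ ℝ. Define the growth rate G = 2(δ² − ξ²) if ξ > −δ and G = 0 otherwise. Then E[G] = 2(δ² − σ²)Φ(δ/σ) + 2σδφ(δ/σ), where φ and Φ are the standard normal pdf and cdf. -/
/-!
Writing `ξ = σ Z` with `Z` standard normal and `d = δ / σ`, the growth rate is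
`2 σ² (d² - Z²)` on the event `Z > -d`. The only nontrivial ingredient is the truncated second
moment: integrating `(z φ(z))' = φ(z) - z² φ(z)` over `(a, ∞)` gives
`∫_a^∞ z² φ = Φ(-a) + a φ(a)`.
-/

open MeasureTheory ProbabilityTheory Real

noncomputable def stdNormalPdf (x : ℝ) : ℝ := (Real.sqrt (2 * Real.pi))⁻¹ * Real.exp (-x^2/2)

noncomputable def stdNormalCdf (y : ℝ) : ℝ := ∫ t in Set.Iic y, stdNormalPdf t

open Filter Set
open scoped Topology

lemma stdNormalPdf_eq_gaussianPDFReal : stdNormalPdf = gaussianPDFReal 0 1 := by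
  ext x
  simp [stdNormalPdf, gaussianPDFReal]

lemma stdNormalPdf_neg (x : ℝ) : stdNormalPdf (-x) = stdNormalPdf x := by
  simp [stdNormalPdf]

lemma hasDerivAt_stdNormalPdf (x : ℝ) : HasDerivAt stdNormalPdf (-x * stdNormalPdf x) x := by
  have h : HasDerivAt (fun y : ℝ => -y ^ 2 / 2) (-x) x :=
    ((hasDerivAt_pow 2 x).neg.div_const 2).congr_deriv (by ring)
  refine (h.exp.const_mul (√(2 * π))⁻¹).congr_deriv ?_
  unfold stdNormalPdf
  ring

lemma integrable_stdNormalPdf : Integrable stdNormalPdf :=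
  stdNormalPdf_eq_gaussianPDFReal ▸ integrable_gaussianPDFReal 0 1

lemma integrable_pow_mul_stdNormalPdf (n : ℕ) :
    Integrable fun x => x ^ n * stdNormalPdf x := by
  have h := (integrable_rpow_mul_exp_neg_mul_sq (b := 1 / 2) (by norm_num)
    (s := n) (by linarith [n.cast_nonneg (α := ℝ)])).const_mul (√(2 * π))⁻¹
  refine h.congr (ae_of_all _ fun x => ?_)
  simp only [stdNormalPdf, rpow_natCast]
  ring_nf

lemma integral_Ioi_stdNormalPdf (a : ℝ) : ∫ x in Ioi a, stdNormalPdf x = stdNormalCdf (-a) := by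
  rw [stdNormalCdf, ← integral_comp_neg_Ioi]
  simp only [stdNormalPdf_neg]

lemma integral_Ioi_sq_mul_stdNormalPdf (a : ℝ) :
    ∫ x in Ioi a, x ^ 2 * stdNormalPdf x = stdNormalCdf (-a) + a * stdNormalPdf a := by
  have hderiv (x : ℝ) : HasDerivAt (fun x => x * stdNormalPdf x)
      (stdNormalPdf x - x ^ 2 * stdNormalPdf x) x :=
    ((hasDerivAt_id x).mul (hasDerivAt_stdNormalPdf x)).congr_deriv (by simp only [id]; ring)
  have hint : Integrable fun x => stdNormalPdf x - x ^ 2 * stdNormalPdf x :=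
    integrable_stdNormalPdf.sub (integrable_pow_mul_stdNormalPdf 2)
  have htendsto : Tendsto (fun x => x * stdNormalPdf x) atTop (𝓝 0) :=
    tendsto_zero_of_hasDerivAt_of_integrableOn_Ioi (a := 0) (fun x _ => hderiv x)
      hint.integrableOn (by simpa using (integrable_pow_mul_stdNormalPdf 1).integrableOn)
  have hFTC := integral_Ioi_of_hasDerivAt_of_tendsto' (a := a) (fun x _ => hderiv x)
    hint.integrableOn htendsto
  rw [integral_sub integrable_stdNormalPdf.integrableOn
    (integrable_pow_mul_stdNormalPdf 2).integrableOn, integral_Ioi_stdNormalPdf] at hFTC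
  linarith

lemma integral_Ioi_neg_sq_sub_sq_mul_stdNormalPdf (d : ℝ) :
    ∫ z in Ioi (-d), (d ^ 2 - z ^ 2) * stdNormalPdf z
      = (d ^ 2 - 1) * stdNormalCdf d + d * stdNormalPdf d := by
  simp only [sub_mul]
  rw [integral_sub (integrable_stdNormalPdf.const_mul (d ^ 2)).integrableOn
    (integrable_pow_mul_stdNormalPdf 2).integrableOn, integral_const_mul,
    integral_Ioi_stdNormalPdf, integral_Ioi_sq_mul_stdNormalPdf, neg_neg, stdNormalPdf_neg]
  ring

lemma integral_gaussianReal_eq_integral_stdNormalPdf {E : Type*} [NormedAddCommGroup E]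
    [NormedSpace ℝ E] {σ : ℝ} (hσ : σ ≠ 0) (f : ℝ → E) :
    ∫ x, f x ∂gaussianReal 0 ⟨σ ^ 2, sq_nonneg σ⟩ = ∫ z, stdNormalPdf z • f (σ * z) := by
  have hmap : gaussianReal 0 ⟨σ ^ 2, sq_nonneg σ⟩ = (gaussianReal 0 1).map (σ * ·) := by
    rw [gaussianReal_map_const_mul, mul_zero, mul_one]
    rfl
  rw [hmap, (measurableEmbedding_mulLeft₀ hσ).integral_map,
    integral_gaussianReal_eq_integral_smul one_ne_zero, stdNormalPdf_eq_gaussianPDFReal]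

theorem kelly_growth_rate (σ δ : ℝ) (hσ : 0 < σ) :
    ∫ x, (if x > -δ then 2 * (δ^2 - x^2) else 0)
        ∂(gaussianReal 0 ⟨σ^2, sq_nonneg σ⟩)
      = 2 * (δ^2 - σ^2) * stdNormalCdf (δ/σ) + 2 * σ * δ * stdNormalPdf (δ/σ) := by
  have hrestrict :
      (fun z => stdNormalPdf z • if σ * z > -δ then 2 * (δ ^ 2 - (σ * z) ^ 2) else 0) =
        (Ioi (-(δ / σ))).indicator
          fun z => 2 * σ ^ 2 * (((δ / σ) ^ 2 - z ^ 2) * stdNormalPdf z) := by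
    ext z
    have hiff : σ * z > -δ ↔ z ∈ Ioi (-(δ / σ)) := by
      rw [mem_Ioi, ← neg_div, div_lt_iff₀ hσ, mul_comm]
    by_cases hz : σ * z > -δ
    · rw [if_pos hz, indicator_of_mem (hiff.1 hz), smul_eq_mul]
      field_simp
    · rw [if_neg hz, indicator_of_notMem (mt hiff.2 hz), smul_zero]
  rw [integral_gaussianReal_eq_integral_stdNormalPdf hσ.ne', hrestrict,
    integral_indicator measurableSet_Ioi, integral_const_mul,
    integral_Ioi_neg_sq_sub_sq_mul_stdNormalPdf]
  field_simp
end
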